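/- arXiv:math/9901029 — 4 statements merged into one kernel-verified Lean document; each statement's English description precedes it below -/
import Mathlib

section
/- Let R be a commutative ring, let m be a positive natural number, and let u ∈ R. Let N be the R-submodule of the free module (Fin m → R) spanned by the elements u • e_i + e_{i+1} for i ∈ Fin m, where i+1 is taken cyclically in Fin m. Then the quotient module (Fin m → R) ⧸ N is isomorphic as an R-module to R ⧸ Ideal.span {1 - (-u)^m}. -/
/-- Let `R` be a commutative ring, `m` a positive natural number and `u ∈ R`.
The quotient of the free module `Fin m → R` by the submodule spanned by the
vectors `u • e_i + e_{i+1}` (indices cyclic in `Fin m`) is isomorphic as an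
`R`-module to `R ⧸ (1 - (-u)^m)`. -/
theorem quotient_cyclic_relations_iso (R : Type*) [CommRing R] (m : ℕ) (hm : 0 < m) (u : R) :
    haveI : NeZero m := ⟨hm.ne'⟩
    Nonempty
      (((Fin m → R) ⧸ Submodule.span R
          (Set.range fun i : Fin m =>
            u • (Pi.single i (1 : R) : Fin m → R) + Pi.single (i + 1) (1 : R))) ≃ₗ[R]
        (R ⧸ Ideal.span {(1 : R) - (-u) ^ m})) := by
  obtain ⟨n, rfl⟩ := Nat.exists_eq_succ_of_ne_zero hm.ne'
  set N : Submodule R (Fin (n+1) → R) := Submodule.span R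
      (Set.range fun i : Fin (n+1) =>
        u • (Pi.single i (1 : R) : Fin (n+1) → R) + Pi.single (i + 1) (1 : R)) with hNdef
  set I : Ideal R := Ideal.span {(1 : R) - (-u) ^ (n+1)} with hIdef
  have hrel : ∀ i : Fin (n+1),
      u • (Pi.single i (1 : R) : Fin (n+1) → R) + Pi.single (i + 1) (1 : R) ∈ N :=
    fun i => Submodule.subset_span ⟨i, rfl⟩
  have hkey : ∀ j : Fin (n+1),
      N.mkQ (Pi.single j (1 : R)) = (-u) ^ (j : ℕ) • N.mkQ (Pi.single 0 (1 : R)) := by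
    intro j
    induction j using Fin.induction with
    | zero => simp
    | succ i ih =>
      have h0 : N.mkQ (u • (Pi.single i.castSucc (1 : R) : Fin (n+1) → R)
          + Pi.single i.succ (1 : R)) = 0 := by
        rw [← Fin.coeSucc_eq_succ]
        exact (Submodule.Quotient.mk_eq_zero N).mpr (hrel i.castSucc)
      rw [map_add, map_smul] at h0
      have h1 : N.mkQ (Pi.single i.succ (1 : R))
          = -(u • N.mkQ (Pi.single i.castSucc (1 : R))) :=
        eq_neg_of_add_eq_zero_right h0
      rw [h1, ih, smul_smul, ← neg_smul]
      congr 1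
      rw [Fin.val_succ, Fin.coe_castSucc, pow_succ]
      ring
  have hwrap : ((1 : R) - (-u) ^ (n+1)) • (Pi.single 0 (1 : R) : Fin (n+1) → R) ∈ N := by
    rw [← Submodule.Quotient.mk_eq_zero N, ← Submodule.mkQ_apply, map_smul]
    have h0 : N.mkQ (u • (Pi.single (Fin.last n) (1 : R) : Fin (n+1) → R)
        + Pi.single 0 (1 : R)) = 0 := by
      rw [← Fin.last_add_one]
      exact (Submodule.Quotient.mk_eq_zero N).mpr (hrel (Fin.last n))
    rw [map_add, map_smul, hkey (Fin.last n), Fin.val_last, smul_smul] at h0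
    rw [sub_smul, one_smul, pow_succ]
    have h2 : ((-u) ^ n * -u) • N.mkQ (Pi.single 0 (1:R))
        = -((u * (-u)^n) • N.mkQ (Pi.single 0 (1:R))) := by
      rw [← neg_smul]; ring_nf
    rw [h2, sub_neg_eq_add]
    exact (add_comm _ _).trans h0
  -- the forward map
  let f : (Fin (n+1) → R) →ₗ[R] R := ∑ i : Fin (n+1), (-u) ^ (i : ℕ) • LinearMap.proj i
  have hf : ∀ j : Fin (n+1), f (Pi.single j (1 : R)) = (-u) ^ (j : ℕ) := by
    intro j
    simp only [f, LinearMap.sum_apply, LinearMap.smul_apply, LinearMap.proj_apply,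
      Pi.single_apply, smul_eq_mul, mul_ite, mul_one, mul_zero,
      Finset.sum_ite_eq', Finset.mem_univ, if_true]
  have hFker : N ≤ LinearMap.ker (I.mkQ.comp f) := by
    rw [hNdef, Submodule.span_le]
    rintro x ⟨i, rfl⟩
    simp only [SetLike.mem_coe, LinearMap.mem_ker, LinearMap.comp_apply, map_add, map_smul, hf]
    rw [← map_smul, smul_eq_mul, ← map_add, Submodule.mkQ_apply, Submodule.Quotient.mk_eq_zero]
    by_cases h : i = Fin.last n
    · subst h
      rw [Fin.last_add_one, Fin.val_last, Fin.val_zero, pow_zero]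
      have he : u * (-u) ^ n + 1 = (1 : R) - (-u) ^ (n+1) := by ring
      rw [he, hIdef]
      exact Ideal.subset_span rfl
    · have hv : ((i + 1 : Fin (n+1)) : ℕ) = (i : ℕ) + 1 := by
        rw [Fin.val_add_one_of_lt]
        exact Fin.lt_last_iff_ne_last.mpr h
      have he : u * (-u) ^ (i:ℕ) + (-u) ^ ((i:ℕ) + 1) = 0 := by rw [pow_succ]; ring
      rw [hv, he]
      exact I.zero_mem
  let F := N.liftQ (I.mkQ.comp f) hFker
  -- the inverse map
  let g : R →ₗ[R] ((Fin (n+1) → R) ⧸ N) :=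
    N.mkQ.comp (LinearMap.toSpanSingleton R _ (Pi.single 0 (1 : R)))
  have hGker : I ≤ LinearMap.ker g := by
    rw [hIdef, Ideal.span_le]
    rintro x hx
    rw [Set.mem_singleton_iff] at hx
    subst hx
    simp only [SetLike.mem_coe, LinearMap.mem_ker, g, LinearMap.comp_apply,
      LinearMap.toSpanSingleton_apply, Submodule.mkQ_apply, Submodule.Quotient.mk_eq_zero]
    exact hwrap
  let G := I.liftQ g hGker
  refine ⟨LinearEquiv.ofLinear F G ?_ ?_⟩
  · apply LinearMap.ext
    intro x
    obtain ⟨r, rfl⟩ := Submodule.mkQ_surjective I x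
    have h1 : f (Pi.single 0 (1:R)) = 1 := by simpa using hf 0
    simp only [LinearMap.comp_apply, Submodule.mkQ_apply, LinearMap.id_apply, G, F,
      Submodule.liftQ_apply, g, LinearMap.comp_apply, LinearMap.toSpanSingleton_apply,
      Submodule.mkQ_apply, map_smul, h1, smul_eq_mul, mul_one]
    rw [← Submodule.Quotient.mk_smul, smul_eq_mul, mul_one]
  · apply Submodule.linearMap_qext
    apply Module.Basis.ext (Pi.basisFun R (Fin (n+1)))
    intro j
    simp only [Pi.basisFun_apply, LinearMap.comp_apply, Submodule.mkQ_apply, LinearMap.id_apply,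
      F, G, Submodule.liftQ_apply, LinearMap.comp_apply, hf, g, map_smul,
      LinearMap.toSpanSingleton_apply, Submodule.mkQ_apply]
    exact ((hkey j).symm).trans (by rw [Submodule.mkQ_apply])
end

section
/- Let n be a positive natural number and let R = ℤ[t,t⁻¹] be the ring of Laurent polynomials over ℤ. Let N_α be the R-submodule of (Fin (2n) → R) spanned by the elements (t−1) • e_i + e_{i−1} for i ∈ Fin (2n), where i−1 is taken cyclically in Fin (2n). Then the quotient module (Fin (2n) → R) ⧸ N_α is isomorphic as an R-module to R ⧸ Ideal.span {1 − (1−t)^{2n}}. -/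
/-!
Write `u = 1 - t`, so the relations say `e_{i-1} = u • e_i`. Walking once around the cycle, every
`e_i` becomes a multiple `u^k • e_0` of `e_0`, and coming back to `e_0` imposes exactly
`e_0 = u^{2n} • e_0`. Hence the quotient is cyclic, generated by `e_0`, with annihilator
`(1 - u^{2n})`; the isomorphism sends `e_i` to `u^{-i}`, read modulo `u^{2n} = 1`.
-/

open LaurentPolynomial Fin.NatCast

lemma pow_val_add_of_pow_eq_one {M : Type*} [Monoid M] {x : M} {m : ℕ} [NeZero m]
    (hx : x ^ m = 1) (i j : Fin m) : x ^ (i + j).val = x ^ i.val * x ^ j.val := by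
  rw [Fin.val_add, ← pow_eq_pow_mod _ hx, pow_add]

lemma pow_val_neg_sub_one_of_pow_eq_one {M : Type*} [Monoid M] {x : M} {m : ℕ} [NeZero m]
    (hx : x ^ m = 1) (i : Fin m) : x ^ (-(i - 1)).val = x ^ (-i).val * x := by
  rw [show -(i - 1) = -i + 1 by abel, pow_val_add_of_pow_eq_one hx, Fin.val_one',
    ← pow_eq_pow_mod _ hx, pow_one]

section CyclicShift

variable {R : Type*} [CommRing R] (m : ℕ) [NeZero m] (a : R)

def cyclicShiftRelations : Submodule R (Fin m → R) :=
  Submodule.span R (Set.range fun i : Fin m => (-a) • Pi.single i 1 + Pi.single (i - 1) 1)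

namespace cyclicShiftRelations

local notation "N" => cyclicShiftRelations m a

lemma mk_single_sub_one (i : Fin m) :
    (Submodule.Quotient.mk (Pi.single (i - 1) 1) : (Fin m → R) ⧸ N)
      = a • Submodule.Quotient.mk (Pi.single i 1) := by
  rw [← Submodule.Quotient.mk_smul, Submodule.Quotient.eq, sub_eq_neg_add, ← neg_smul]
  exact Submodule.subset_span ⟨i, rfl⟩

lemma mk_single_neg_natCast (k : ℕ) :
    (Submodule.Quotient.mk (Pi.single (-(k : Fin m)) 1) : (Fin m → R) ⧸ N)
      = a ^ k • Submodule.Quotient.mk (Pi.single 0 1) := by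
  induction k with
  | zero => simp
  | succ k ih =>
    rw [Nat.cast_succ, neg_add, ← sub_eq_add_neg, mk_single_sub_one, ih, smul_smul, pow_succ']

lemma mk_single (i : Fin m) :
    (Submodule.Quotient.mk (Pi.single i 1) : (Fin m → R) ⧸ N)
      = a ^ (-i).val • Submodule.Quotient.mk (Pi.single 0 1) := by
  simpa using mk_single_neg_natCast m a (-i).val

lemma one_sub_pow_smul_mk_single_zero :
    (1 - a ^ m) • (Submodule.Quotient.mk (Pi.single 0 1) : (Fin m → R) ⧸ N) = 0 := by
  have h := mk_single_neg_natCast m a m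
  rw [Fin.natCast_self, neg_zero] at h
  rw [sub_smul, one_smul, ← h, sub_self]

def toQuotSpan : (Fin m → R) ⧸ N →ₗ[R] R ⧸ Ideal.span {1 - a ^ m} :=
  Submodule.liftQ N
    (Fintype.linearCombination R fun i => Ideal.Quotient.mk _ a ^ (-i).val) <| by
    have hα : Ideal.Quotient.mk (Ideal.span {1 - a ^ m}) a ^ m = 1 := by
      simpa using (Ideal.Quotient.eq.2 (Ideal.mem_span_singleton_self (1 - a ^ m))).symm
    rw [cyclicShiftRelations, Submodule.span_le]
    rintro _ ⟨i, rfl⟩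
    rw [SetLike.mem_coe, LinearMap.mem_ker, map_add, map_smul,
      Fintype.linearCombination_apply_single, Fintype.linearCombination_apply_single, one_smul,
      one_smul, pow_val_neg_sub_one_of_pow_eq_one hα, Algebra.smul_def,
      Ideal.Quotient.algebraMap_eq, map_neg]
    ring

def ofQuotSpan : R ⧸ Ideal.span {1 - a ^ m} →ₗ[R] (Fin m → R) ⧸ N :=
  Submodule.liftQ _ (LinearMap.toSpanSingleton R _ (Submodule.Quotient.mk (Pi.single 0 1))) <| by
    rw [Ideal.span, Submodule.span_singleton_le_iff_mem, LinearMap.mem_ker,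
      LinearMap.toSpanSingleton_apply]
    exact one_sub_pow_smul_mk_single_zero m a

lemma toQuotSpan_mk_single (i : Fin m) :
    toQuotSpan m a (Submodule.Quotient.mk (Pi.single i 1))
      = Submodule.Quotient.mk (a ^ (-i).val) := by
  simp [toQuotSpan]

lemma ofQuotSpan_mk (r : R) :
    ofQuotSpan m a (Submodule.Quotient.mk r) = r • Submodule.Quotient.mk (Pi.single 0 1) :=
  rfl

def quotEquiv : ((Fin m → R) ⧸ N) ≃ₗ[R] R ⧸ Ideal.span {1 - a ^ m} :=
  .ofLinearMap (toQuotSpan m a) (ofQuotSpan m a)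
    (Submodule.linearMap_qext _ <| LinearMap.ext_ring <| by
      change toQuotSpan m a (ofQuotSpan m a (Submodule.Quotient.mk 1)) = Submodule.Quotient.mk 1
      rw [ofQuotSpan_mk, one_smul, toQuotSpan_mk_single, neg_zero, Fin.val_zero, pow_zero])
    (Submodule.linearMap_qext _ <| LinearMap.pi_ext' fun i => LinearMap.ext_ring <| by
      change ofQuotSpan m a (toQuotSpan m a (Submodule.Quotient.mk (Pi.single i 1)))
        = Submodule.Quotient.mk (Pi.single i 1)
      rw [toQuotSpan_mk_single, ofQuotSpan_mk, ← mk_single])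

end cyclicShiftRelations

end CyclicShift

/-- For `n > 0` and `R = ℤ[t,t⁻¹]`, the quotient of `Fin (2n) → R` by the submodule
spanned by the vectors `(t - 1) • e_i + e_{i-1}` (indices cyclic in `Fin (2n)`)
is isomorphic as an `R`-module to `R ⧸ (1 - (1 - t)^(2n))`. -/
theorem wheel_meridians_alpha_module (n : ℕ) (hn : 0 < n) :
    haveI : NeZero (2 * n) := ⟨by omega⟩
    Nonempty
      (((Fin (2 * n) → LaurentPolynomial ℤ) ⧸ Submodule.span (LaurentPolynomial ℤ)
          (Set.range fun i : Fin (2 * n) =>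
            (T 1 - 1 : LaurentPolynomial ℤ) •
                (Pi.single i (1 : LaurentPolynomial ℤ) : Fin (2 * n) → LaurentPolynomial ℤ) +
              Pi.single (i - 1) (1 : LaurentPolynomial ℤ))) ≃ₗ[LaurentPolynomial ℤ]
        (LaurentPolynomial ℤ ⧸
          Ideal.span {(1 : LaurentPolynomial ℤ) - (1 - T 1) ^ (2 * n)})) := by
  have : NeZero (2 * n) := ⟨by omega⟩
  rw [← neg_sub (1 : LaurentPolynomial ℤ) (T 1)]
  exact ⟨cyclicShiftRelations.quotEquiv (2 * n) (1 - T 1)⟩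
end

section
/- Let n be a positive natural number and work in the ring of formal power series ℚ[[X]]. Let exp denote the exponential power series Σ_{k≥0} X^k/k!, let E₋ be the series obtained from exp by substituting −X for X, and set F = (1 − (1 − exp)^{2n}) · (1 − (1 − E₋)^{2n}). Then the coefficient of X^0 in F is 1, the coefficient of X^k in F is 0 for every k with 1 ≤ k < 2n, and the coefficient of X^{2n} in F is −2. -/
/-!
Both `1 - e^X` and `1 - e^{-X}` are `X` times a series with constant term `∓1`, so their
`2n`-th powers are `X^{2n} p` and `X^{2n} q` with `p(0) = q(0) = 1`. Expanding,
`F = 1 - X^{2n} (p + q) + X^{4n} p q`, whose coefficients up to degree `2n` are `1, 0, …, 0, -2`.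
-/

open PowerSeries

variable {R : Type*} [CommRing R]

theorem exists_eq_X_mul_and_constantCoeff_eq_coeff_one {f : R⟦X⟧} (hf : constantCoeff f = 0) :
    ∃ g, f = X * g ∧ constantCoeff g = coeff 1 f := by
  obtain ⟨g, rfl⟩ := X_dvd_iff.2 hf
  exact ⟨g, rfl, by rw [coeff_succ_X_mul, coeff_zero_eq_constantCoeff_apply]⟩

theorem coeff_one_sub_X_pow_mul_mul_one_sub_X_pow_mul {m : ℕ} (hm : 0 < m) (p q : R⟦X⟧) :
    coeff 0 ((1 - X ^ m * p) * (1 - X ^ m * q)) = 1 ∧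
      (∀ k, 1 ≤ k → k < m → coeff k ((1 - X ^ m * p) * (1 - X ^ m * q)) = 0) ∧
      coeff m ((1 - X ^ m * p) * (1 - X ^ m * q)) = -(constantCoeff p + constantCoeff q) := by
  have expand : (1 - X ^ m * p) * (1 - X ^ m * q) =
      1 - X ^ m * (p + q) + X ^ (m + m) * (p * q) := by ring
  simp only [expand, map_add, map_sub, coeff_one, coeff_X_pow_mul']
  refine ⟨by simp [hm.ne'], fun k hk1 hkm => ?_, ?_⟩
  · simp [show k ≠ 0 by omega, show ¬ m ≤ k by omega, show ¬ m + m ≤ k by omega]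
  · simp [hm.ne', show ¬ m + m ≤ m by omega]

variable {A : Type*} [CommRing A] [Algebra ℚ A]

theorem constantCoeff_one_sub_rescale_exp (a : A) : constantCoeff (1 - rescale a (exp A)) = 0 := by
  rw [← coeff_zero_eq_constantCoeff_apply, map_sub, coeff_rescale, coeff_exp, coeff_one]
  simp

theorem coeff_one_one_sub_rescale_exp (a : A) : coeff 1 (1 - rescale a (exp A)) = -a := by
  simp [coeff_rescale, coeff_exp, coeff_one]

theorem exists_one_sub_rescale_exp_eq_X_mul (a : A) :
    ∃ g, 1 - rescale a (exp A) = X * g ∧ constantCoeff g = -a := by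
  simpa only [coeff_one_one_sub_rescale_exp] using
    exists_eq_X_mul_and_constantCoeff_eq_coeff_one (constantCoeff_one_sub_rescale_exp a)

/-- In `ℚ[[X]]`, let `E₋ = rescale (-1) exp` be the series of `e^{-X}` and set
`F = (1 - (1 - exp)^(2n)) * (1 - (1 - E₋)^(2n))` (the Conway power series of the
wheel-claspered unknot `U^{W_{2n}}`). For `n > 0`, `F` has constant coefficient
`1`, vanishing coefficients in degrees `k` with `1 ≤ k < 2n`, and coefficient
`-2` in degree `2n`. -/
theorem conway_series_of_wheel (n : ℕ) (hn : 0 < n) :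
    PowerSeries.coeff (R := ℚ) 0
        ((1 - (1 - PowerSeries.exp ℚ) ^ (2 * n)) *
          (1 - (1 - PowerSeries.rescale (-1 : ℚ) (PowerSeries.exp ℚ)) ^ (2 * n))) = 1 ∧
      (∀ k, 1 ≤ k → k < 2 * n →
        PowerSeries.coeff (R := ℚ) k
          ((1 - (1 - PowerSeries.exp ℚ) ^ (2 * n)) *
            (1 - (1 - PowerSeries.rescale (-1 : ℚ) (PowerSeries.exp ℚ)) ^ (2 * n))) = 0) ∧
      PowerSeries.coeff (R := ℚ) (2 * n)
        ((1 - (1 - PowerSeries.exp ℚ) ^ (2 * n)) *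
          (1 - (1 - PowerSeries.rescale (-1 : ℚ) (PowerSeries.exp ℚ)) ^ (2 * n))) = -2 := by
  obtain ⟨g, hg, hg0⟩ := exists_one_sub_rescale_exp_eq_X_mul (1 : ℚ)
  obtain ⟨h, hh, hh0⟩ := exists_one_sub_rescale_exp_eq_X_mul (-1 : ℚ)
  rw [rescale_one, RingHom.id_apply] at hg
  rw [hg, hh, mul_pow, mul_pow]
  obtain ⟨coeff_zero, coeff_low, coeff_mid⟩ :=
    coeff_one_sub_X_pow_mul_mul_one_sub_X_pow_mul (by omega : 0 < 2 * n) (g ^ (2 * n)) (h ^ (2 * n))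
  refine ⟨coeff_zero, coeff_low, ?_⟩
  rw [coeff_mid, map_pow, map_pow, hg0, hh0]
  norm_num [pow_mul]
end

section
/- Let n be a positive natural number and work in the ring of formal power series ℚ[[X]]. Let F = (1 − (1 − exp)^{2n}) · (1 − (1 − E₋)^{2n}), where exp is the exponential power series and E₋ is obtained from exp by substituting −X for X, and let E = Σ_{j≥0} (2 X^{2n})^j / j! be the formal power series of exp(2X^{2n}) (the substitution of 2X^{2n} into exp). Then the coefficient of X^0 in F · E is 1 and the coefficient of X^k in F · E is 0 for every k with 1 ≤ k ≤ 2n. -/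
open PowerSeries

/-!
Modulo `X^(2n+1)`, both `(1 - e^X)^(2n)` and `(1 - e^(-X))^(2n)` are `X^(2n)`, since
`1 - e^(±X) ≡ ∓X` modulo `X^2`, and `exp (2 X^(2n)) ≡ 1 + 2 X^(2n)`. With `t = X^(2n)` and
`t^2 ≡ 0` the product becomes `(1 - t)^2 (1 + 2t) = 1 - 3t^2 + 2t^3 ≡ 1`.
-/

/-- The formal power series `exp (2 X^(2n)) = Σ_{j ≥ 0} (2 X^(2n))^j / j!` in
`ℚ[[X]]`: its coefficient in degree `k` is `2^j / j!` if `k = 2n·j` and `0` if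
`2n` does not divide `k`. -/
noncomputable def expTwoXPow (n : ℕ) : PowerSeries ℚ :=
  PowerSeries.mk fun k =>
    if 2 * n ∣ k then (2 : ℚ) ^ (k / (2 * n)) / (Nat.factorial (k / (2 * n)) : ℚ) else 0

namespace PowerSeries

section CommRing

variable {R : Type*} [CommRing R]

theorem X_pow_succ_dvd_pow_sub_pow {f g : R⟦X⟧} (hg : X ∣ g) (hfg : X ^ 2 ∣ f - g) (m : ℕ) :
    X ^ (m + 1) ∣ f ^ m - g ^ m := by
  obtain ⟨b, rfl⟩ := hg
  obtain ⟨c, hc⟩ := hfg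
  have hf : f = X * (b + X * c) := by linear_combination hc
  have hab : X ∣ (b + X * c) ^ m - b ^ m := by
    have h := sub_dvd_pow_sub_pow (b + X * c) b m
    rw [add_sub_cancel_left] at h
    exact (dvd_mul_right X c).trans h
  rw [hf, mul_pow, mul_pow, ← mul_sub, pow_succ]
  exact mul_dvd_mul_left _ hab

end CommRing

section ExpAlgebra

variable (A : Type*) [CommRing A] [Algebra ℚ A]

theorem X_sq_dvd_one_sub_exp_sub_neg_X : X ^ 2 ∣ (1 - exp A) - (-X) := by
  refine X_pow_dvd_iff.mpr fun m hm => ?_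
  interval_cases m <;> simp [coeff_exp, coeff_one, coeff_X]

theorem X_sq_dvd_one_sub_rescale_neg_one_exp_sub_X :
    X ^ 2 ∣ (1 - rescale (-1) (exp A)) - X := by
  refine X_pow_dvd_iff.mpr fun m hm => ?_
  interval_cases m <;> simp only [map_sub, coeff_rescale, coeff_exp, coeff_one, coeff_X] <;> simp

theorem X_pow_succ_dvd_one_sub_exp_pow_sub (m : ℕ) :
    X ^ (m + 1) ∣ (1 - exp A) ^ m - (-X) ^ m :=
  X_pow_succ_dvd_pow_sub_pow (dvd_neg.mpr dvd_rfl) (X_sq_dvd_one_sub_exp_sub_neg_X A) m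

theorem X_pow_succ_dvd_one_sub_rescale_neg_one_exp_pow_sub (m : ℕ) :
    X ^ (m + 1) ∣ (1 - rescale (-1) (exp A)) ^ m - X ^ m :=
  X_pow_succ_dvd_pow_sub_pow dvd_rfl (X_sq_dvd_one_sub_rescale_neg_one_exp_sub_X A) m

end ExpAlgebra

end PowerSeries

theorem X_pow_succ_dvd_expTwoXPow_sub {n : ℕ} (hn : 0 < n) :
    X ^ (2 * n + 1) ∣ expTwoXPow n - (1 + 2 * X ^ (2 * n)) := by
  rw [← map_ofNat C 2]
  refine X_pow_dvd_iff.mpr fun m hm => ?_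
  simp only [expTwoXPow, map_sub, map_add, coeff_mk, coeff_one, coeff_C_mul, coeff_X_pow]
  obtain rfl | hm0 := Nat.eq_zero_or_pos m
  · simp [hn.ne']
  obtain rfl | hlt := (Nat.lt_succ_iff.mp hm).eq_or_lt
  · simp [Nat.div_self (by omega : 0 < 2 * n), hm0.ne']
  · have : ¬ 2 * n ∣ m := fun h => (Nat.le_of_dvd hm0 h).not_gt hlt
    simp [this, hm0.ne', hlt.ne]

theorem dvd_one_sub_mul_one_sub_mul_sub_one {R : Type*} [CommRing R] {p t a b e : R}
    (ha : p ∣ a - t) (hb : p ∣ b - t) (he : p ∣ e - (1 + 2 * t)) (ht : p ∣ t ^ 2) :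
    p ∣ (1 - a) * (1 - b) * e - 1 := by
  set π := Ideal.Quotient.mk (Ideal.span {p})
  simp only [← Ideal.Quotient.eq_zero_iff_dvd, map_sub, map_mul, map_add, map_one, map_pow,
    map_ofNat] at *
  linear_combination -(1 - π b) * π e * ha - (1 - π t) * π e * hb + (1 - π t) ^ 2 * he
    + (2 * π t - 3) * ht

/-- Let `F = (1 - (1 - exp)^(2n)) * (1 - (1 - E₋)^(2n))` be the Conway power
series of the wheel-claspered unknot (with `E₋ = rescale (-1) exp` the series of
`e^{-X}`), and let `E = exp (2 X^(2n))`.  For `n > 0`, the product `F * E` has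
constant coefficient `1` and vanishing coefficients in all degrees `k` with
`1 ≤ k ≤ 2n`; i.e. `F = exp (-2 X^(2n))` modulo `X^(2n+1)`. -/
theorem conway_series_of_wheel_exp_form (n : ℕ) (hn : 0 < n) :
    PowerSeries.coeff (R := ℚ) 0
        ((1 - (1 - PowerSeries.exp ℚ) ^ (2 * n)) *
            (1 - (1 - PowerSeries.rescale (-1 : ℚ) (PowerSeries.exp ℚ)) ^ (2 * n)) *
          expTwoXPow n) = 1 ∧
      ∀ k, 1 ≤ k → k ≤ 2 * n →
        PowerSeries.coeff (R := ℚ) k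
          ((1 - (1 - PowerSeries.exp ℚ) ^ (2 * n)) *
              (1 - (1 - PowerSeries.rescale (-1 : ℚ) (PowerSeries.exp ℚ)) ^ (2 * n)) *
            expTwoXPow n) = 0 := by
  have hA : X ^ (2 * n + 1) ∣ (1 - exp ℚ) ^ (2 * n) - X ^ (2 * n) := by
    simpa only [(even_two_mul n).neg_pow] using X_pow_succ_dvd_one_sub_exp_pow_sub ℚ (2 * n)
  have hX : X ^ (2 * n + 1) ∣ (X ^ (2 * n) : ℚ⟦X⟧) ^ 2 := by
    rw [← pow_mul]
    exact pow_dvd_pow X (by omega)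
  have hdvd := dvd_one_sub_mul_one_sub_mul_sub_one hA
    (X_pow_succ_dvd_one_sub_rescale_neg_one_exp_pow_sub ℚ (2 * n))
    (X_pow_succ_dvd_expTwoXPow_sub hn) hX
  have hcoeff := X_pow_dvd_iff.mp hdvd
  refine ⟨sub_eq_zero.mp ?_, fun k hk1 hk2 => ?_⟩
  · simpa only [map_sub, coeff_one, if_pos] using hcoeff 0 (by omega)
  · simpa only [map_sub, coeff_one, if_neg (by omega : k ≠ 0), sub_zero] using hcoeff k (by omega)
end
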